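/- Let λ be a partition of length at most n. Then the orthosymplectic Schur function in n symplectic variables X = (x₁,…,x_n) and one ordinary variable y satisfies spo_λ(X; y) = (1/D) · det( x_i^{λ_j+n−j+1} − x̄_i^{λ_j+n−j+1} + y·(x_i^{λ_j+n−j} − x̄_i^{λ_j+n−j}) )_{1≤i,j≤n}, where D = ∏_{i=1}^n (x_i − x̄_i) · ∏_{1≤i<j≤n} (x_i + x̄_i − x_j − x̄_j) and x̄_i = x_i^{-1}. -/

import Mathlib

/-- The symplectic Schur function `sp_λ(x₁,…,x_n)` via the Weyl character formula. -/
noncomputable def spSchur {K : Type*} [Field K] {n : ℕ} (x : Fin n → K) (lam : Fin n → ℕ) : K :=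
  (Matrix.of fun i j : Fin n =>
      x i ^ (lam j + (n - (j : ℕ))) - (x i)⁻¹ ^ (lam j + (n - (j : ℕ)))).det /
  (Matrix.of fun i j : Fin n =>
      x i ^ (n - (j : ℕ)) - (x i)⁻¹ ^ (n - (j : ℕ))).det

/-- Complete homogeneous symmetric polynomial of degree `p` of a family `y`. -/
noncomputable def hsym {K : Type*} [CommRing K] {m : ℕ} (y : Fin m → K) (p : ℕ) : K :=
  ∑ s : Sym (Fin m) p, (s.1.map y).prod

/-- `h_r` with integer index, vanishing for `r < 0`. -/
noncomputable def hInt {K : Type*} [CommRing K] {m : ℕ} (y : Fin m → K) (r : ℤ) : K :=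
  if r < 0 then 0 else hsym y r.toNat

/-- The orthosymplectic Schur function `spo_λ(X;Y) = Σ_μ sp_μ(X) · s_{λ'/μ'}(Y)`, where the
sum is over partitions `μ ⊆ λ` of length at most `n` (the skew Schur polynomial vanishes for
other `μ`), the skew Schur polynomial `s_{λ'/μ'}` being given by the Jacobi–Trudi determinant
`det(h_{λ'_i − μ'_j − i + j})` of size `λ₁ ≥ ℓ(λ')`.  Here `lam : ℕ → ℕ` is `λ` (0-indexed),
with all parts of `λ` among the first `L` entries. -/
noncomputable def spoSchur {K : Type*} [Field K] (n L : ℕ) {m : ℕ} (x : Fin n → K)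
    (lam : ℕ → ℕ) (ys : Fin m → K) : K :=
  ∑ g : (i : Fin n) → Fin (lam i + 1),
    if ∀ i j : Fin n, i ≤ j → ((g j : ℕ) ≤ (g i : ℕ)) then
      spSchur x (fun i => (g i : ℕ)) *
        (Matrix.of fun i j : Fin (lam 0) =>
          hInt ys
            (((((Finset.range L).filter fun t => (i : ℕ) + 1 ≤ lam t).card : ℤ))
              - (((Finset.univ : Finset (Fin n)).filter fun t => (j : ℕ) + 1 ≤ (g t : ℕ)).card : ℤ)
              - (i : ℕ) + (j : ℕ))).det
    else 0

/-!
Expanding the determinant column by column in `y` gives `∑_S y^|S| · W(e_S) / D`, where `W(e)` is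
the Weyl numerator `det(x_i^{e_j} − x̄_i^{e_j})` and `e_S j = λ_j + n − j − [j ∈ S]`. Since `e_S` is
weakly decreasing, `W(e_S)` vanishes unless `e_S` is strictly decreasing and positive, which
happens exactly when `μ = λ − 1_S` is a partition, i.e. when `λ/μ` is a vertical strip; and then
`W(e_S) / D = sp_μ(X)` and `|S| = |λ/μ|`.

On the other side, the Jacobi–Trudi matrix of `s_{λ'/μ'}(y)` has entries `y^{a_i − b_j}` (or `0`)
with `a_i = λ'_{i+1} − i` and `b_j = μ'_{j+1} − j` strictly decreasing, so its determinant is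
`y^{|λ/μ|}` times the determinant of the `0/1` matrix `[b_j ≤ a_i]`, which is `1` if the two
sequences interlace (`a_1 ≥ b_1 > a_2 ≥ b_2 > ⋯`, i.e. `λ/μ` is a vertical strip) and `0`
otherwise. Finally `D` is the Weyl denominator `W(n, n−1, …, 1)`: writing
`x^{k+1} − x̄^{k+1} = (x − x̄) S_k(x + x̄)` with the monic Chebyshev polynomials `S_k`, it becomes
a Vandermonde determinant in the `x_i + x̄_i`.
-/

open Polynomial Finset Matrix

lemma hsym_fin_one {R : Type*} [CommRing R] (y : R) (p : ℕ) : hsym ![y] p = y ^ p := by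
  have hconst : (![y] : Fin 1 → R) = fun _ => y :=
    funext fun i => by rw [Subsingleton.elim i 0]; rfl
  simp [hsym, hconst, Multiset.map_const', Sym.card_coe]

lemma hInt_fin_one {R : Type*} [CommRing R] (y : R) (r : ℤ) :
    hInt ![y] r = if r < 0 then 0 else y ^ r.toNat := by
  rw [hInt, hsym_fin_one]

namespace Polynomial.Chebyshev

variable {R : Type*} [CommRing R]

lemma S_natCast_add_two (k : ℕ) : S R (k + 2 : ℕ) = X * S R (k + 1 : ℕ) - S R k := by
  push_cast
  exact S_add_two R k

lemma S_natCast_monic_and_natDegree [Nontrivial R] (k : ℕ) :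
    (S R k).Monic ∧ (S R k).natDegree = k := by
  induction k using Nat.twoStepInduction with
  | zero => simp
  | one => simp
  | more k ih₀ ih₁ =>
    have hX : (X * S R (k + 1 : ℕ)).Monic := monic_X.mul ih₁.1
    have hXdeg : (X * S R (k + 1 : ℕ)).natDegree = k + 2 := by
      rw [monic_X.natDegree_mul ih₁.1, natDegree_X, ih₁.2]
      ring
    have hlt : (S R k).natDegree < (X * S R (k + 1 : ℕ)).natDegree := by omega
    rw [S_natCast_add_two]
    exact ⟨hX.sub_of_left (degree_lt_degree hlt),
      by rw [natDegree_sub_eq_left_of_natDegree_lt hlt, hXdeg]⟩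

lemma sub_mul_S_eval_add (x y : R) (hxy : x * y = 1) (k : ℕ) :
    (x - y) * (S R k).eval (x + y) = x ^ (k + 1) - y ^ (k + 1) := by
  induction k using Nat.twoStepInduction with
  | zero => simp
  | one => simp; ring
  | more k ih₀ ih₁ =>
    rw [S_natCast_add_two, eval_sub, eval_mul, eval_X]
    linear_combination (x + y) * ih₁ - ih₀ + (x ^ (k + 1) - y ^ (k + 1)) * hxy

lemma sub_inv_mul_S_eval_add_inv {K : Type*} [Field K] (x : K) (k : ℕ) :
    (x - x⁻¹) * (S K k).eval (x + x⁻¹) = x ^ (k + 1) - x⁻¹ ^ (k + 1) := by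
  -- for `x = 0` both sides vanish, as `0⁻¹ = 0`
  rcases eq_or_ne x 0 with rfl | hx
  · simp
  · exact sub_mul_S_eval_add x x⁻¹ (mul_inv_cancel₀ hx) k

end Polynomial.Chebyshev

lemma det_eval_rev_eq_prod_sub {R : Type*} [CommRing R] {n : ℕ} (v : Fin n → R) (p : ℕ → R[X])
    (hdeg : ∀ k, (p k).natDegree = k) (hmonic : ∀ k, (p k).Monic) :
    (of fun i j : Fin n => (p (j.rev : ℕ)).eval (v i)).det = ∏ i, ∏ j ∈ Ioi i, (v i - v j) := by
  -- reversing the columns turns both this matrix and `projVandermonde 1 v = (v i ^ j.rev)` into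
  -- matrices with the Vandermonde determinant, at the same sign cost
  have hsign := det_permute' Fin.revPerm (of fun i j : Fin n => (p (j.rev : ℕ)).eval (v i))
  have hproj := det_permute' Fin.revPerm (projVandermonde 1 v)
  have hV : (projVandermonde 1 v).submatrix id Fin.revPerm = vandermonde v := by
    ext i j
    simp [projVandermonde_apply]
  have hP : (of fun i j : Fin n => (p (j.rev : ℕ)).eval (v i)).submatrix id Fin.revPerm
      = of fun i j : Fin n => (p j).eval (v i) := by
    ext i j
    simp only [submatrix_apply, of_apply, id, Fin.revPerm_apply, Fin.rev_rev]
  rw [hP, ← det_eval_matrixOfPolynomials_eq_det_vandermonde v (fun j => p j)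
    (fun j => hdeg j) (fun j => hmonic j), ← hV, hproj] at hsign
  have hunit : IsUnit ((Equiv.Perm.sign (Fin.revPerm : Equiv.Perm (Fin n)) : ℤ) : R) := by
    rcases Int.units_eq_one_or (Equiv.Perm.sign (Fin.revPerm : Equiv.Perm (Fin n))) with h | h <;>
      simp [h]
  rw [← hunit.mul_left_cancel hsign, det_projVandermonde]
  simp

section WeylNumerator

variable {K : Type*} [Field K] {n : ℕ}

noncomputable def weylNumerator (x : Fin n → K) (e : Fin n → ℕ) : K :=
  (of fun i j => x i ^ e j - (x i)⁻¹ ^ e j).det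

lemma spSchur_eq_weylNumerator_div (x : Fin n → K) (μ : Fin n → ℕ) :
    spSchur x μ = weylNumerator x (fun j => μ j + (n - j)) / weylNumerator x (fun j => n - j) :=
  rfl

lemma weylNumerator_eq_zero_of_not_injective (x : Fin n → K) {e : Fin n → ℕ}
    (he : ¬ Function.Injective e) : weylNumerator x e = 0 := by
  obtain ⟨j, k, hjk, hne⟩ : ∃ j k, e j = e k ∧ j ≠ k := by
    simpa [Function.Injective] using he
  exact det_zero_of_column_eq hne fun i => by simp [hjk]

lemma weylNumerator_eq_zero_of_eq_zero (x : Fin n → K) {e : Fin n → ℕ} {j : Fin n}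
    (hj : e j = 0) : weylNumerator x e = 0 :=
  det_eq_zero_of_column_eq_zero j fun i => by simp [hj]

open Polynomial.Chebyshev in
lemma weylNumerator_rho_eq_prod (x : Fin n → K) :
    weylNumerator x (fun j => n - j)
      = (∏ i, (x i - (x i)⁻¹)) * ∏ i, ∏ j ∈ Ioi i, (x i + (x i)⁻¹ - x j - (x j)⁻¹) := by
  have hentry : (of fun i j : Fin n => x i ^ (n - (j : ℕ)) - (x i)⁻¹ ^ (n - (j : ℕ)))
      = of fun i j => (x i - (x i)⁻¹) * (S K (j.rev : ℕ)).eval (x i + (x i)⁻¹) := by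
    ext i j
    rw [of_apply, of_apply, sub_inv_mul_S_eval_add_inv, Fin.val_rev]
    congr 2 <;> omega
  rw [weylNumerator, hentry]
  refine (det_mul_column (fun i => x i - (x i)⁻¹)
    (of fun i j : Fin n => (S K (j.rev : ℕ)).eval (x i + (x i)⁻¹))).trans ?_
  rw [det_eval_rev_eq_prod_sub _ (fun k => S K k) (fun k => (S_natCast_monic_and_natDegree k).2)
    (fun k => (S_natCast_monic_and_natDegree k).1)]
  simp only [sub_sub, add_sub_add_comm]

end WeylNumerator

lemma det_add_mul_eq_sum_det_ite {R : Type*} [CommRing R] {n : Type*} [Fintype n]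
    [DecidableEq n] (y : R) (P Q : Matrix n n R) :
    (of fun i j => P i j + y * Q i j).det
      = ∑ s : Finset n, y ^ s.card * (of fun i j => if j ∈ s then Q i j else P i j).det := by
  let d := (detRowAlternating : (n → R) [⋀^n]→ₗ[R] R).toMultilinearMap
  let p : n → n → R := fun j i => P i j
  let q : n → n → R := fun j i => Q i j
  have hsum : (of fun i j => P i j + y * Q i j)ᵀ = (fun j => y • q j) + p := by
    ext i j; simp [p, q, add_comm]
  rw [← det_transpose, hsum]
  change d _ = _
  rw [MultilinearMap.map_add_univ]
  refine sum_congr rfl fun s _ => ?_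
  have hpw : s.piecewise (fun j => y • q j) p
      = s.piecewise (fun j => y • s.piecewise q p j) (s.piecewise q p) := by
    ext j : 1
    by_cases hj : j ∈ s <;> simp [hj]
  have hcols : s.piecewise q p = (of fun i j => if j ∈ s then Q i j else P i j)ᵀ := by
    ext j i
    by_cases hj : j ∈ s <;> simp [hj, p, q]
  rw [hpw, MultilinearMap.map_piecewise_smul, prod_const, smul_eq_mul, hcols]
  exact congrArg _ (det_transpose _)

section InterlacingDeterminant

variable {R : Type*} [CommRing R] {N : ℕ} {a b : Fin N → ℤ}

lemma det_ite_pow_eq_pow_mul_det_ite (y : R) :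
    (of fun i j : Fin N => if a i - b j < 0 then 0 else y ^ (a i - b j).toNat).det
      = y ^ (∑ i, (a i - b i)).toNat *
          (of fun i j : Fin N => if a i - b j < 0 then 0 else (1 : R)).det := by
  simp only [det_apply, of_apply, mul_sum]
  refine sum_congr rfl fun σ _ => ?_
  rw [mul_smul_comm]
  congr 1
  by_cases hnonneg : ∀ i, 0 ≤ a (σ i) - b i
  · rw [prod_congr rfl fun i _ => if_neg (not_lt.mpr (hnonneg i)),
      prod_congr rfl fun i _ => if_neg (not_lt.mpr (hnonneg i)), prod_const_one, mul_one,
      prod_pow_eq_pow_sum]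
    congr 1
    have hsum : ∑ i, (a (σ i) - b i) = ∑ i, (a i - b i) := by
      rw [sum_sub_distrib, sum_sub_distrib, Equiv.sum_comp σ a]
    rw [← hsum, ← Int.toNat_natCast (∑ i, (a (σ i) - b i).toNat)]
    push_cast
    exact congrArg _ (sum_congr rfl fun i _ => Int.toNat_of_nonneg (hnonneg i))
  · push Not at hnonneg
    obtain ⟨i, hi⟩ := hnonneg
    rw [prod_eq_zero (mem_univ i), prod_eq_zero (mem_univ i), mul_zero] <;> exact if_pos hi

lemma det_ite_eq_zero_of_lt (ha : StrictAnti a) (hb : StrictAnti b) {i₀ : Fin N}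
    (hi₀ : a i₀ < b i₀) : (of fun i j : Fin N => if a i - b j < 0 then 0 else (1 : R)).det = 0 := by
  rw [det_apply]
  refine sum_eq_zero fun σ _ => ?_
  -- the rows `≥ i₀` vanish on the columns `≤ i₀`, and `σ` cannot avoid that block
  obtain ⟨j, hj, hσj⟩ : ∃ j, j ≤ i₀ ∧ i₀ ≤ σ j := by
    by_contra! hcon
    have hmaps : ∀ j ∈ Iic i₀, σ j ∈ Iio i₀ := fun j hj => mem_Iio.mpr (hcon j (mem_Iic.mp hj))
    have hcard := card_le_card_of_injOn σ hmaps σ.injective.injOn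
    rw [Fin.card_Iic, Fin.card_Iio] at hcard
    omega
  have := ha.antitone hσj
  have := hb.antitone hj
  rw [prod_eq_zero (mem_univ j), smul_zero]
  exact if_pos (by omega)

lemma det_ite_eq_one_of_interlace (ha : StrictAnti a) (hle : ∀ i, b i ≤ a i)
    (hlt : ∀ i j : Fin N, (j : ℕ) = i + 1 → a j < b i) :
    (of fun i j : Fin N => if a i - b j < 0 then 0 else (1 : R)).det = 1 := by
  have htri : (of fun i j : Fin N => if a i - b j < 0 then 0 else (1 : R)).IsUpperTriangular := by
    intro i j hji
    have hj : (j : ℕ) + 1 < N := by have := i.isLt; have : (j : ℕ) < i := hji; omega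
    have := hlt j ⟨j + 1, hj⟩ rfl
    have := ha.antitone (show (⟨j + 1, hj⟩ : Fin N) ≤ i from Fin.le_def.mpr hji)
    exact if_pos (by omega)
  rw [det_of_isUpperTriangular htri]
  exact prod_eq_one fun i _ => if_neg (by have := hle i; omega)

lemma det_ite_eq_zero_of_not_interlace (ha : StrictAnti a) (hb : StrictAnti b)
    (h : ∃ i j : Fin N, (j : ℕ) = i + 1 ∧ b i ≤ a j) :
    (of fun i j : Fin N => if a i - b j < 0 then 0 else (1 : R)).det = 0 := by
  obtain ⟨i, hi⟩ := h
  -- at the first `p` with `b p ≤ a (p + 1)`, rows `p` and `p + 1` coincide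
  obtain ⟨p, ⟨q, hpq, hbq⟩, hmin⟩ :=
    wellFounded_lt.has_min {i : Fin N | ∃ j : Fin N, (j : ℕ) = i + 1 ∧ b i ≤ a j} ⟨i, hi⟩
  have hpq' : p < q := Fin.lt_def.mpr (by omega)
  refine det_zero_of_row_eq hpq'.ne (funext fun k => ?_)
  simp only [of_apply]
  rcases le_or_gt p k with hpk | hkp
  · have := hb.antitone hpk
    have := ha.antitone hpq'.le
    rw [if_neg (by omega), if_neg (by omega)]
  · have hk : (k : ℕ) + 1 < N := by have := q.isLt; have : (k : ℕ) < p := hkp; omega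
    have hak : a ⟨k + 1, hk⟩ < b k := by
      by_contra hge
      exact hmin k ⟨⟨k + 1, hk⟩, rfl, not_lt.mp hge⟩ hkp
    have := ha.antitone (show (⟨k + 1, hk⟩ : Fin N) ≤ p from Fin.le_def.mpr hkp)
    have := ha.antitone hpq'.le
    rw [if_pos (by omega), if_pos (by omega)]

lemma det_ite_pow_eq_ite (ha : StrictAnti a) (hb : StrictAnti b) (y : R) :
    (of fun i j : Fin N => if a i - b j < 0 then 0 else y ^ (a i - b j).toNat).det
      = if (∀ i, b i ≤ a i) ∧ ∀ i j : Fin N, (j : ℕ) = i + 1 → a j < b i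
        then y ^ (∑ i, (a i - b i)).toNat else 0 := by
  rw [det_ite_pow_eq_pow_mul_det_ite]
  split_ifs with h
  · rw [det_ite_eq_one_of_interlace ha h.1 h.2, mul_one]
  · rcases not_and_or.mp h with hle | hlt
    · push Not at hle
      obtain ⟨i, hi⟩ := hle
      rw [det_ite_eq_zero_of_lt ha hb hi, mul_zero]
    · push Not at hlt
      rw [det_ite_eq_zero_of_not_interlace ha hb hlt, mul_zero]

end InterlacingDeterminant

section ColumnLengths

variable {n : ℕ}

-- `colLen μ k = μ'_k`, the length of the `k`-th column of the Young diagram of `μ`.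
def colLen (μ : Fin n → ℕ) (k : ℕ) : ℕ := #{t | k ≤ μ t}

lemma colLen_antitone (μ : Fin n → ℕ) : Antitone (colLen μ) :=
  fun _ _ hkl => card_le_card (monotone_filter_right _ fun _ _ h => le_trans hkl h)

lemma colLen_mono {μ ν : Fin n → ℕ} (h : μ ≤ ν) (k : ℕ) : colLen μ k ≤ colLen ν k :=
  card_le_card (monotone_filter_right _ fun t _ hk => le_trans hk (h t))

lemma strictAnti_colLen_succ_sub (μ : Fin n → ℕ) {M : ℕ} :
    StrictAnti fun i : Fin M => (colLen μ (i + 1) : ℤ) - i := fun i j hij => by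
  have := colLen_antitone μ (show (i : ℕ) + 1 ≤ j + 1 by have : (i : ℕ) < j := hij; omega)
  dsimp only
  omega

lemma sum_colLen_succ {μ : Fin n → ℕ} {M : ℕ} (hM : ∀ t, μ t ≤ M) :
    ∑ k : Fin M, colLen μ (k + 1) = ∑ t, μ t := by
  simp only [colLen, card_filter]
  rw [sum_comm]
  refine sum_congr rfl fun t _ => ?_
  rw [Fin.sum_univ_eq_sum_range (fun k => if k + 1 ≤ μ t then 1 else 0), ← card_filter]
  have : {k ∈ range M | k + 1 ≤ μ t} = range (μ t) := by
    ext k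
    simp only [mem_filter, mem_range]
    have := hM t
    omega
  rw [this, card_range]

lemma colLen_le_iff_le_add_one {lam μ : Fin n → ℕ} (hlam : Antitone lam) (hμ : Antitone μ)
    {M : ℕ} (hM : ∀ t, lam t ≤ M) :
    (∀ k, k + 1 < M → colLen lam (k + 2) ≤ colLen μ (k + 1)) ↔ ∀ t, lam t ≤ μ t + 1 := by
  refine ⟨fun h t => ?_, fun h k _ => card_le_card (monotone_filter_right _ fun s _ hs => ?_)⟩
  · by_contra! hgt
    have hcol := h (lam t - 2) (by have := hM t; omega)
    rw [show lam t - 2 + 2 = lam t by omega, show lam t - 2 + 1 = lam t - 1 by omega] at hcol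
    have hlam_col : t.val + 1 ≤ colLen lam (lam t) := by
      rw [← Fin.card_Iic]
      exact card_le_card fun s hs => mem_filter.mpr ⟨mem_univ _, hlam (mem_Iic.mp hs)⟩
    have hμ_col : colLen μ (lam t - 1) ≤ t.val := by
      rw [← Fin.card_Iio]
      refine card_le_card fun s hs => mem_Iio.mpr ?_
      by_contra! hts
      have := hμ hts
      have := (mem_filter.mp hs).2
      omega
    omega
  · have := h s
    omega

end ColumnLengths

lemma det_hInt_fin_one_colLen {R : Type*} [CommRing R] (y : R) {n M : ℕ} {lam μ : Fin n → ℕ}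
    (hlam : Antitone lam) (hμ : Antitone μ) (hle : μ ≤ lam) (hM : ∀ t, lam t ≤ M) :
    (of fun i j : Fin M =>
        hInt ![y] ((colLen lam (i + 1) : ℤ) - colLen μ (j + 1) - i + j)).det
      = if ∀ t, lam t ≤ μ t + 1 then y ^ ∑ t, (lam t - μ t) else 0 := by
  set a : Fin M → ℤ := fun i => colLen lam (i + 1) - i
  set b : Fin M → ℤ := fun j => colLen μ (j + 1) - j
  have hentry : (of fun i j : Fin M =>
      hInt ![y] ((colLen lam (i + 1) : ℤ) - colLen μ (j + 1) - i + j))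
      = of fun i j => if a i - b j < 0 then 0 else y ^ (a i - b j).toNat := by
    ext i j
    have hab : (colLen lam (i + 1) : ℤ) - colLen μ (j + 1) - i + j = a i - b j := by ring
    rw [of_apply, of_apply, hInt_fin_one, hab]
  have hsum : (∑ i, (a i - b i)).toNat = ∑ t, (lam t - μ t) := by
    have : ∑ i, (a i - b i) = ∑ i : Fin M, ((colLen lam (i + 1) : ℤ) - colLen μ (i + 1)) :=
      sum_congr rfl fun i _ => by ring
    have hμM : ∀ t, μ t ≤ M := fun t => (hle t).trans (hM t)
    have hμlam := sum_le_sum fun t (_ : t ∈ univ) => hle t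
    rw [this, sum_sub_distrib, ← Nat.cast_sum, ← Nat.cast_sum, sum_colLen_succ hM,
      sum_colLen_succ hμM, sum_tsub_distrib _ fun t _ => hle t]
    omega
  have hcond : ((∀ i, b i ≤ a i) ∧ ∀ i j : Fin M, (j : ℕ) = i + 1 → a j < b i)
      ↔ ∀ t, lam t ≤ μ t + 1 := by
    have hba : ∀ i, b i ≤ a i := fun i => by
      have := colLen_mono hle (i + 1)
      simp only [a, b]; omega
    rw [← colLen_le_iff_le_add_one hlam hμ hM]
    simp only [hba, implies_true, true_and]
    constructor
    · intro h k hk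
      have := h ⟨k, by omega⟩ ⟨k + 1, hk⟩ rfl
      simp only [a, b, add_assoc, Nat.reduceAdd] at this
      omega
    · intro h i j hij
      have := h i (by omega)
      simp only [a, b, hij, add_assoc, Nat.reduceAdd]
      omega
  rw [hentry, det_ite_pow_eq_ite (strictAnti_colLen_succ_sub lam) (strictAnti_colLen_succ_sub μ),
    hsum]
  exact if_congr hcond rfl rfl

lemma Fin.add_val_antitone_of_strictAnti {n : ℕ} {e : Fin n → ℕ} (he : StrictAnti e) :
    Antitone fun j => e j + j := by
  intro j k hjk
  have hmaps : ∀ l ∈ Icc j k, e l ∈ Icc (e k) (e j) := fun l hl =>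
    mem_Icc.mpr ⟨he.antitone (mem_Icc.mp hl).2, he.antitone (mem_Icc.mp hl).1⟩
  have := card_le_card_of_injOn e hmaps he.injective.injOn
  rw [Fin.card_Icc, Nat.card_Icc] at this
  have := he.antitone hjk
  have : (j : ℕ) ≤ k := hjk
  dsimp only
  omega

section ColumnExpansion

variable {n : ℕ} (lam : ℕ → ℕ)

def weylExp (S : Finset (Fin n)) (j : Fin n) : ℕ :=
  if j ∈ S then lam j + (n - 1 - j) else lam j + (n - j)

def IsAdmissible (S : Finset (Fin n)) : Prop :=
  Function.Injective (weylExp lam S) ∧ ∀ j, weylExp lam S j ≠ 0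

def IsVerticalStrip (g : (i : Fin n) → Fin (lam i + 1)) : Prop :=
  Antitone (fun i => (g i : ℕ)) ∧ ∀ t : Fin n, lam t ≤ g t + 1

def stripRows (g : (i : Fin n) → Fin (lam i + 1)) : Finset (Fin n) := {t | g t < lam t}

def removeBoxes (S : Finset (Fin n)) (i : Fin n) : Fin (lam i + 1) :=
  ⟨lam i - if i ∈ S then 1 else 0, Nat.lt_succ_of_le (Nat.sub_le _ _)⟩

variable {lam}

lemma weylExp_antitone (hlam : Antitone lam) (S : Finset (Fin n)) :
    Antitone (weylExp lam S) := by
  intro j k hjk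
  have := hlam (show (j : ℕ) ≤ k from hjk)
  rcases hjk.lt_or_eq with hlt | rfl
  · have : (j : ℕ) < k := hlt
    have := k.isLt
    unfold weylExp
    split_ifs <;> omega
  · exact le_rfl

lemma one_le_of_mem_of_isAdmissible (hlam : Antitone lam) {S : Finset (Fin n)}
    (hS : IsAdmissible lam S) {j : Fin n} (hj : j ∈ S) : 1 ≤ lam j := by
  have hanti := Fin.add_val_antitone_of_strictAnti
    ((weylExp_antitone hlam S).strictAnti_of_injective hS.1)
  obtain ⟨last, hlast⟩ : ∃ l : Fin n, (l : ℕ) = n - 1 := ⟨⟨n - 1, by have := j.isLt; omega⟩, rfl⟩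
  have hj_last := hanti (show j ≤ last from Fin.le_def.mpr (by have := j.isLt; omega))
  have := hS.2 last
  have hj' : weylExp lam S j = lam j + (n - 1 - j) := if_pos hj
  dsimp only at hj_last
  omega

lemma isVerticalStrip_removeBoxes (hlam : Antitone lam) {S : Finset (Fin n)}
    (hS : IsAdmissible lam S) :
    IsVerticalStrip lam (removeBoxes lam S) := by
  refine ⟨fun j k hjk => ?_, fun t => by simp only [removeBoxes]; split_ifs <;> omega⟩
  have hanti := Fin.add_val_antitone_of_strictAnti
    ((weylExp_antitone hlam S).strictAnti_of_injective hS.1) hjk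
  have := one_le_of_mem_of_isAdmissible hlam hS (j := j)
  have := one_le_of_mem_of_isAdmissible hlam hS (j := k)
  have := k.isLt
  have : (j : ℕ) ≤ k := hjk
  simp only [weylExp, removeBoxes] at hanti ⊢
  split_ifs at hanti ⊢ <;> omega

lemma weylExp_stripRows {g : (i : Fin n) → Fin (lam i + 1)} (hg : IsVerticalStrip lam g)
    (j : Fin n) :
    weylExp lam (stripRows lam g) j = g j + (n - j) := by
  have := hg.2 j
  have := (g j).isLt
  have := j.isLt
  simp only [weylExp, stripRows, mem_filter, mem_univ, true_and]
  split_ifs <;> omega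

lemma isAdmissible_stripRows {g : (i : Fin n) → Fin (lam i + 1)} (hg : IsVerticalStrip lam g) :
    IsAdmissible lam (stripRows lam g) := by
  have hstrict : StrictAnti fun j : Fin n => (g j : ℕ) + (n - j) := fun j k hjk => by
    have : (g k : ℕ) ≤ g j := hg.1 hjk.le
    have : (j : ℕ) < k := hjk
    have := k.isLt
    dsimp only
    omega
  refine ⟨fun j k hjk => hstrict.injective ?_, fun j => ?_⟩
  · simpa only [weylExp_stripRows hg] using hjk
  · rw [weylExp_stripRows hg]
    have := j.isLt
    omega

lemma removeBoxes_stripRows {g : (i : Fin n) → Fin (lam i + 1)} (hg : IsVerticalStrip lam g) :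
    removeBoxes lam (stripRows lam g) = g := by
  funext i
  have := hg.2 i
  have := (g i).isLt
  ext
  simp only [removeBoxes, stripRows, mem_filter, mem_univ, true_and]
  split_ifs <;> omega

lemma stripRows_removeBoxes (hlam : Antitone lam) {S : Finset (Fin n)}
    (hS : IsAdmissible lam S) :
    stripRows lam (removeBoxes lam S) = S := by
  ext j
  by_cases h : j ∈ S
  · have := one_le_of_mem_of_isAdmissible hlam hS h
    simp [h, removeBoxes, stripRows]
    omega
  · simp [h, removeBoxes, stripRows]

lemma card_stripRows {g : (i : Fin n) → Fin (lam i + 1)} (hg : IsVerticalStrip lam g) :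
    #(stripRows lam g) = ∑ t : Fin n, (lam t - g t) := by
  rw [stripRows, card_filter]
  refine sum_congr rfl fun t _ => ?_
  have := hg.2 t
  have := (g t).isLt
  split_ifs <;> omega

end ColumnExpansion

lemma card_filter_range_eq_card_filter_fin (p : ℕ → Prop) [DecidablePred p] (n : ℕ) :
    #{t ∈ range n | p t} = #{t : Fin n | p t} := by
  rw [card_filter, card_filter, Fin.sum_univ_eq_sum_range (fun t => if p t then 1 else 0)]

section Summands

variable {K : Type*} [Field K] {n : ℕ} (x : Fin n → K) {lam : ℕ → ℕ}

lemma det_ite_mem_eq_weylNumerator (S : Finset (Fin n)) :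
    (of fun i j : Fin n => if j ∈ S
      then x i ^ (lam j + (n - 1 - j)) - (x i)⁻¹ ^ (lam j + (n - 1 - j))
      else x i ^ (lam j + (n - j)) - (x i)⁻¹ ^ (lam j + (n - j))).det
      = weylNumerator x (weylExp lam S) := by
  unfold weylNumerator weylExp
  congr 1
  ext i j
  rw [of_apply, of_apply]
  split_ifs <;> rfl

lemma isAdmissible_of_weylNumerator_ne_zero {S : Finset (Fin n)}
    (h : weylNumerator x (weylExp lam S) ≠ 0) :
    IsAdmissible lam S :=
  ⟨not_not.mp fun hinj => h (weylNumerator_eq_zero_of_not_injective x hinj),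
    fun _ hj => h (weylNumerator_eq_zero_of_eq_zero x hj)⟩

open scoped Classical in
lemma spoSchur_summand_eq (hlam : Antitone lam) (y : K) (g : (i : Fin n) → Fin (lam i + 1)) :
    (if ∀ i j : Fin n, i ≤ j → ((g j : ℕ) ≤ (g i : ℕ)) then
      spSchur x (fun i => (g i : ℕ)) *
        (Matrix.of fun i j : Fin (lam 0) =>
          hInt ![y]
            (((((Finset.range n).filter fun t => (i : ℕ) + 1 ≤ lam t).card : ℤ))
              - (((Finset.univ : Finset (Fin n)).filter fun t => (j : ℕ) + 1 ≤ (g t : ℕ)).card : ℤ)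
              - (i : ℕ) + (j : ℕ))).det
    else 0)
      = if IsVerticalStrip lam g then
          y ^ (∑ t : Fin n, (lam t - g t)) * weylNumerator x (fun j => g j + (n - j)) /
            weylNumerator x (fun j => n - j)
        else 0 := by
  by_cases hg : ∀ i j : Fin n, i ≤ j → ((g j : ℕ) ≤ (g i : ℕ))
  · have hJT := det_hInt_fin_one_colLen y (lam := fun t : Fin n => lam t) (μ := fun t => g t)
      (fun _ _ h => hlam h) hg (fun t => Nat.lt_succ_iff.mp (g t).isLt)
      (fun t => hlam t.val.zero_le)
    simp only [colLen] at hJT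
    simp only [card_filter_range_eq_card_filter_fin]
    rw [if_pos hg, hJT, spSchur_eq_weylNumerator_div]
    by_cases hstrip : ∀ t : Fin n, lam t ≤ g t + 1
    · rw [if_pos hstrip, if_pos ⟨hg, hstrip⟩]
      ring
    · rw [if_neg hstrip, if_neg fun h => hstrip h.2, mul_zero]
  · rw [if_neg hg, if_neg fun h => hg h.1]

end Summands

theorem spo_one_odd_det_general {K : Type*} [Field K] (n : ℕ) (x : Fin n → K)
    (lam : ℕ → ℕ) (hA : Antitone lam) (y : K) :
    spoSchur n n x lam ![y]
      = (Matrix.of fun i j : Fin n =>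
          x i ^ (lam j + (n - (j : ℕ))) - (x i)⁻¹ ^ (lam j + (n - (j : ℕ)))
            + y * (x i ^ (lam j + (n - 1 - (j : ℕ))) - (x i)⁻¹ ^ (lam j + (n - 1 - (j : ℕ))))).det /
        ((∏ i, (x i - (x i)⁻¹)) *
          ∏ i, ∏ j ∈ Finset.Ioi i, (x i + (x i)⁻¹ - x j - (x j)⁻¹)) := by
  classical
  rw [← weylNumerator_rho_eq_prod, det_add_mul_eq_sum_det_ite y
    (fun i j => x i ^ (lam j + (n - (j : ℕ))) - (x i)⁻¹ ^ (lam j + (n - (j : ℕ))))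
    (fun i j => x i ^ (lam j + (n - 1 - (j : ℕ))) - (x i)⁻¹ ^ (lam j + (n - 1 - (j : ℕ)))),
    sum_div, spoSchur]
  simp only [spoSchur_summand_eq x hA y, det_ite_mem_eq_weylNumerator]
  rw [← sum_filter]
  refine Eq.trans ?_ (sum_filter_of_ne (p := IsAdmissible lam) fun S _ h =>
    isAdmissible_of_weylNumerator_ne_zero x (right_ne_zero_of_mul (div_ne_zero_iff.mp h).1))
  refine sum_nbij' (stripRows lam) (removeBoxes lam) ?_ ?_ ?_ ?_ ?_ <;>
    simp only [mem_filter, mem_univ, true_and]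
  · exact fun g => isAdmissible_stripRows
  · exact fun S => isVerticalStrip_removeBoxes hA
  · exact fun g => removeBoxes_stripRows
  · exact fun S => stripRows_removeBoxes hA
  · intro g hg
    rw [card_stripRows hg, funext (weylExp_stripRows hg)]

/-- Determinantal formula for the orthosymplectic Schur function with one odd variable:
`spo_λ(X; y) = (1/D) det(x_i^{λ_j+n−j+1} − x̄_i^{λ_j+n−j+1} + y(x_i^{λ_j+n−j} − x̄_i^{λ_j+n−j}))`,
where `D = ∏_i (x_i − x̄_i) ∏_{i<j} (x_i + x̄_i − x_j − x̄_j)`. -/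
theorem spo_one_odd_det {K : Type*} [Field K] (n : ℕ) (x : Fin n → K) (hx : ∀ i, x i ≠ 0)
    (lam : ℕ → ℕ) (hA : Antitone lam) (hlen : ∀ i, n ≤ i → lam i = 0) (y : K) :
    spoSchur n n x lam ![y]
      = (Matrix.of fun i j : Fin n =>
          x i ^ (lam j + (n - (j : ℕ))) - (x i)⁻¹ ^ (lam j + (n - (j : ℕ)))
            + y * (x i ^ (lam j + (n - 1 - (j : ℕ))) - (x i)⁻¹ ^ (lam j + (n - 1 - (j : ℕ))))).det /
        ((∏ i, (x i - (x i)⁻¹)) *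
          ∏ i, ∏ j ∈ Finset.Ioi i, (x i + (x i)⁻¹ - x j - (x j)⁻¹)) :=
  spo_one_odd_det_general n x lam hA y
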